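/- Let M ≥ m > 0 and A a bounded linear operator on a complex Hilbert space such that Re⟨Mx − Ax, Ax − mx⟩ ≥ 0 for all unit vectors x. Then ‖A‖² − w(A)² ≤ (sqrt(M) − sqrt(m))²·w(A). -/

import Mathlib

noncomputable def numRadius {H : Type*} [NormedAddCommGroup H] [InnerProductSpace ℂ H]
    (T : H →L[ℂ] H) : ℝ :=
  sSup {r : ℝ | ∃ x : H, ‖x‖ = 1 ∧ r = ‖(inner ℂ (T x) x : ℂ)‖}

/-!
For a unit vector `x` the hypothesis expands to `‖A x‖² ≤ (M + m) Re⟨A x, x⟩ - m M`, which is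
at most `(M + m) w - m M` with `w = w(A)`. Completing the square,
`(M + m) w - m M = w² + (√M - √m)² w - (w - √(m M))²`, so `‖A x‖² ≤ w² + (√M - √m)² w`,
and taking the supremum over unit vectors bounds `‖A‖²` in the same way.
-/

open RCLike in
theorem re_inner_smul_sub_sub_smul {𝕜 E : Type*} [RCLike 𝕜] [NormedAddCommGroup E]
    [InnerProductSpace 𝕜 E] (u x : E) (a b : ℝ) :
    re (inner 𝕜 ((a : 𝕜) • x - u) (u - (b : 𝕜) • x)) =
      (a + b) * re (inner 𝕜 u x) - ‖u‖ ^ 2 - a * b * ‖x‖ ^ 2 := by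
  have hsymm : re (inner 𝕜 x u) = re (inner 𝕜 u x) := by rw [← inner_conj_symm, conj_re]
  simp only [inner_sub_left, inner_sub_right, inner_smul_left, inner_smul_right,
    inner_self_eq_norm_sq_to_K, map_sub, re_ofReal_mul, conj_ofReal, hsymm]
  norm_cast
  ring

theorem add_mul_sub_mul_le_sq_add_sqrt_sub_sqrt_sq_mul {a b : ℝ} (ha : 0 ≤ a) (hb : 0 ≤ b)
    (w : ℝ) : (a + b) * w - a * b ≤ w ^ 2 + (√a - √b) ^ 2 * w := by
  have hsq : (a + b) * w - a * b = w ^ 2 + (√a - √b) ^ 2 * w - (w - √a * √b) ^ 2 := by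
    linear_combination (b - w) * Real.sq_sqrt ha + (√a ^ 2 - w) * Real.sq_sqrt hb
  linarith [sq_nonneg (w - √a * √b)]

theorem ContinuousLinearMap.opNorm_sq_le_of_unit_norm_sq {𝕜 E F : Type*} [RCLike 𝕜]
    [SeminormedAddCommGroup E] [NormedSpace 𝕜 E] [SeminormedAddCommGroup F] [NormedSpace 𝕜 F]
    (f : E →L[𝕜] F) {B : ℝ} (hB : 0 ≤ B) (hf : ∀ x, ‖x‖ = 1 → ‖f x‖ ^ 2 ≤ B) :
    ‖f‖ ^ 2 ≤ B :=
  (Real.le_sqrt (norm_nonneg f) hB).1 <| f.opNorm_le_of_unit_norm (Real.sqrt_nonneg B)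
    fun x hx => (Real.le_sqrt (norm_nonneg _) hB).2 (hf x hx)

section NumRadius

variable {H : Type*} [NormedAddCommGroup H] [InnerProductSpace ℂ H] (T : H →L[ℂ] H)

theorem norm_inner_le_numRadius {x : H} (hx : ‖x‖ = 1) : ‖inner ℂ (T x) x‖ ≤ numRadius T := by
  refine le_csSup ⟨‖T‖, ?_⟩ ⟨x, hx, rfl⟩
  rintro r ⟨y, hy, rfl⟩
  simpa [hy] using (norm_inner_le_norm (T y) y).trans
    (mul_le_mul_of_nonneg_right (T.le_opNorm y) (norm_nonneg y))

theorem numRadius_nonneg : 0 ≤ numRadius T :=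
  Real.sSup_nonneg <| by rintro r ⟨x, -, rfl⟩; positivity

end NumRadius

theorem stmt_16_general {H : Type*} [NormedAddCommGroup H] [InnerProductSpace ℂ H]
    (A : H →L[ℂ] H) (m M : ℝ) (hm : 0 < m) (hmM : m ≤ M)
    (h : ∀ x : H, ‖x‖ = 1 →
      0 ≤ (inner ℂ ((M : ℂ) • x - A x) (A x - (m : ℂ) • x) : ℂ).re) :
    ‖A‖ ^ 2 - numRadius A ^ 2 ≤ (Real.sqrt M - Real.sqrt m) ^ 2 * numRadius A := by
  set w := numRadius A
  have hM : 0 ≤ M := hm.le.trans hmM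
  have hw : 0 ≤ w := numRadius_nonneg A
  suffices ∀ x, ‖x‖ = 1 → ‖A x‖ ^ 2 ≤ w ^ 2 + (√M - √m) ^ 2 * w by
    linarith [A.opNorm_sq_le_of_unit_norm_sq (by positivity) this]
  intro x hx
  have hexpand := (h x hx).trans_eq (re_inner_smul_sub_sub_smul (𝕜 := ℂ) (A x) x M m)
  have hre : RCLike.re (inner ℂ (A x) x) ≤ w :=
    (RCLike.re_le_norm _).trans (norm_inner_le_numRadius A hx)
  rw [hx] at hexpand
  linarith [mul_le_mul_of_nonneg_left hre (add_nonneg hM hm.le),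
    add_mul_sub_mul_le_sq_add_sqrt_sub_sqrt_sq_mul hM hm.le w]

theorem stmt_16 {H : Type*} [NormedAddCommGroup H] [InnerProductSpace ℂ H] [CompleteSpace H]
    (A : H →L[ℂ] H) (m M : ℝ) (hm : 0 < m) (hmM : m ≤ M)
    (h : ∀ x : H, ‖x‖ = 1 →
      0 ≤ (inner ℂ ((M : ℂ) • x - A x) (A x - (m : ℂ) • x) : ℂ).re) :
    ‖A‖ ^ 2 - numRadius A ^ 2 ≤ (Real.sqrt M - Real.sqrt m) ^ 2 * numRadius A :=
  stmt_16_general A m M hm hmM h
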